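/- arXiv:2110.02546 — 3 statements merged into one kernel-verified Lean document; each statement's English description precedes it below -/
import Mathlib

section
/- Let (λ_m)_{m∈ℕ} be a sequence of real numbers with λ_m = (mπ)² + o(1) as m → ∞. Then, as m → ∞, Σ_{m₁∈ℤ, m₁∉{0,−2m}} | 1/(λ_m − π²(m+m₁)²) − 1/(π²m² − π²(m+m₁)²) | = o(m^{−2}). -/
open Real Filter Asymptotics

set_option maxHeartbeats 1000000

lemma int_abs_prod_ge (m : ℕ) (a : ℤ) (ha : a ≠ 0) (hb : 2 * (m : ℤ) + a ≠ 0) :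
    (m : ℤ) ≤ |a| * |2 * (m : ℤ) + a| := by
  have h1 : 1 ≤ |a| := Int.one_le_abs ha
  have h2 : 1 ≤ |2 * (m : ℤ) + a| := Int.one_le_abs hb
  have h3 : |2 * (m : ℤ)| ≤ |2 * (m : ℤ) + a| + |a| := by
    have := abs_add_le (2 * (m : ℤ) + a) (-a)
    simpa using this
  have h4 : |2 * (m : ℤ)| = 2 * m := by
    rw [abs_of_nonneg]; positivity
  nlinarith

lemma term_bound (L : ℝ) (m : ℕ) (hm : 1 ≤ m) (a : ℤ) (ha : a ≠ 0)
    (ha2 : a ≠ -(2 * (m : ℤ)))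
    (hE : |L - π ^ 2 * (m : ℝ) ^ 2| ≤ π ^ 2 * (m : ℝ) / 2) :
    |1 / (L - π ^ 2 * ((m : ℝ) + (a : ℝ)) ^ 2) -
        1 / (π ^ 2 * (m : ℝ) ^ 2 - π ^ 2 * ((m : ℝ) + (a : ℝ)) ^ 2)|
      ≤ |L - π ^ 2 * (m : ℝ) ^ 2| / π ^ 4 / (m : ℝ) ^ 2 *
          (1 / (a : ℝ) ^ 2 + 1 / (2 * (m : ℝ) + (a : ℝ)) ^ 2) := by
  have hπ : (0 : ℝ) < π := pi_pos
  set A : ℝ := (a : ℝ) with hAdef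
  set B : ℝ := 2 * (m : ℝ) + A with hBdef
  have hbz : 2 * (m : ℤ) + a ≠ 0 := by omega
  have hA : A ≠ 0 := Int.cast_ne_zero.mpr ha
  have hB : B ≠ 0 := by
    have : ((2 * (m : ℤ) + a : ℤ) : ℝ) ≠ 0 := by exact_mod_cast hbz
    push_cast at this
    simpa [hBdef, hAdef] using this
  have hm1 : (1 : ℝ) ≤ (m : ℝ) := by exact_mod_cast hm
  have hmR : (0 : ℝ) < (m : ℝ) := by linarith
  have habprod : (m : ℝ) ≤ |A| * |B| := by
    have h0 := int_abs_prod_ge m a ha hbz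
    have h2 : ((m : ℤ) : ℝ) ≤ ((|a| * |2 * (m : ℤ) + a| : ℤ) : ℝ) := by exact_mod_cast h0
    push_cast at h2
    convert h2 using 2
  set E : ℝ := L - π ^ 2 * (m : ℝ) ^ 2 with hEdef
  set D : ℝ := π ^ 2 * (m : ℝ) ^ 2 - π ^ 2 * ((m : ℝ) + A) ^ 2 with hDdef
  have hDeq : D = -(π ^ 2 * A * B) := by rw [hDdef, hBdef]; ring
  have habsD : |D| = π ^ 2 * (|A| * |B|) := by
    rw [hDeq, abs_neg, abs_mul, abs_mul, abs_of_pos (by positivity : (0:ℝ) < π ^ 2), mul_assoc]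
  have hDge : π ^ 2 * (m : ℝ) ≤ |D| := by
    rw [habsD]
    have hp2 : (0 : ℝ) < π ^ 2 := by positivity
    nlinarith
  have hDabspos : (0 : ℝ) < |D| := by nlinarith
  have hD0 : D ≠ 0 := by
    intro h; rw [h] at hDabspos; simp at hDabspos
  have hE2 : |E| ≤ |D| / 2 := by
    calc |E| ≤ π ^ 2 * (m : ℝ) / 2 := hE
    _ ≤ |D| / 2 := by linarith
  have hD'low : |D| / 2 ≤ |D + E| := by
    have h1 : |D| ≤ |D + E| + |E| := by
      have := abs_add_le (D + E) (-E)
      simpa using this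
    linarith
  have hD'pos : (0 : ℝ) < |D + E| := by linarith
  have hD'0 : D + E ≠ 0 := by
    intro h; rw [h] at hD'pos; simp at hD'pos
  have hLeq : L - π ^ 2 * ((m : ℝ) + A) ^ 2 = D + E := by rw [hDdef, hEdef]; ring
  rw [hLeq]
  have hdiff : 1 / (D + E) - 1 / D = -E / ((D + E) * D) := by
    field_simp
    ring
  rw [hdiff, abs_div, abs_neg, abs_mul]
  have hA2 : (0 : ℝ) < A ^ 2 := by positivity
  have hB2 : (0 : ℝ) < B ^ 2 := by positivity
  have hDsq : |D| * |D| = π ^ 4 * (A ^ 2 * B ^ 2) := by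
    rw [abs_mul_abs_self, hDeq]; ring
  calc |E| / (|D + E| * |D|) ≤ 2 * |E| / (|D| * |D|) := by
        rw [div_le_div_iff₀ (by positivity) (by positivity)]
        nlinarith [mul_le_mul_of_nonneg_left hD'low (by positivity : (0:ℝ) ≤ 2 * |E| * |D|)]
    _ = |E| * (2 / (π ^ 4 * (A ^ 2 * B ^ 2))) := by rw [hDsq]; ring
    _ ≤ |E| * ((1 / A ^ 2 + 1 / B ^ 2) / (π ^ 4 * (m : ℝ) ^ 2)) := by
        apply mul_le_mul_of_nonneg_left _ (abs_nonneg E)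
        rw [div_add_div _ _ (ne_of_gt hA2) (ne_of_gt hB2), one_mul, mul_one,
          div_div, div_le_div_iff₀ (by positivity) (by positivity)]
        have hkey : 2 * (m : ℝ) ^ 2 ≤ A ^ 2 + B ^ 2 := by
          rw [hBdef]; nlinarith [sq_nonneg (A + (m : ℝ))]
        have hp4 : (0 : ℝ) < π ^ 4 := by positivity
        have H := mul_le_mul_of_nonneg_right hkey
          (le_of_lt (mul_pos (mul_pos hp4 hA2) hB2))
        nlinarith [H]
    _ = |E| / π ^ 4 / (m : ℝ) ^ 2 * (1 / A ^ 2 + 1 / B ^ 2) := by ring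

/-- If `λ_m = (mπ)² + o(1)`, then
`Σ_{m₁∈ℤ, m₁∉{0,−2m}} |1/(λ_m − π²(m+m₁)²) − 1/(π²m² − π²(m+m₁)²)| = o(m⁻²)`. -/
theorem denominator_replacement_littleo
    (lam : ℕ → ℝ)
    (hlam : Tendsto (fun m : ℕ => lam m - ((m : ℝ) * π) ^ 2) atTop (nhds 0)) :
    (fun m : ℕ =>
        ∑' m₁ : {k : ℤ // k ≠ 0 ∧ k ≠ -(2 * (m : ℤ))},
          |1 / (lam m - π ^ 2 * ((m : ℝ) + (m₁.1 : ℝ)) ^ 2) -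
            1 / (π ^ 2 * (m : ℝ) ^ 2 - π ^ 2 * ((m : ℝ) + (m₁.1 : ℝ)) ^ 2)|)
      =o[atTop] fun m : ℕ => 1 / (m : ℝ) ^ 2 := by
  have hπ : (0 : ℝ) < π := pi_pos
  have hTs : Summable fun k : ℤ => 1 / (k : ℝ) ^ 2 :=
    summable_one_div_int_pow.mpr one_lt_two
  set T : ℝ := ∑' k : ℤ, 1 / (k : ℝ) ^ 2 with hTdef
  have hT0 : 0 ≤ T := tsum_nonneg fun k => by positivity
  rw [isLittleO_iff]
  intro c hc
  have hδpos : 0 < min (π ^ 2 / 2) (c * π ^ 4 / (2 * T + 1)) := by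
    apply lt_min (by positivity) (by positivity)
  have hev : ∀ᶠ m : ℕ in atTop,
      |lam m - ((m : ℝ) * π) ^ 2| < min (π ^ 2 / 2) (c * π ^ 4 / (2 * T + 1)) := by
    have := Metric.tendsto_nhds.mp hlam _ hδpos
    simpa [Real.dist_eq] using this
  filter_upwards [hev, eventually_ge_atTop 1] with m hEδ hm1
  set E : ℝ := lam m - π ^ 2 * (m : ℝ) ^ 2 with hEdef
  have hEeq : lam m - ((m : ℝ) * π) ^ 2 = E := by rw [hEdef]; ring
  rw [hEeq] at hEδ
  have hm1R : (1 : ℝ) ≤ (m : ℝ) := by exact_mod_cast hm1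
  have hE1 : |E| ≤ π ^ 2 * (m : ℝ) / 2 := by
    have h1 : |E| < π ^ 2 / 2 := lt_of_lt_of_le hEδ (min_le_left _ _)
    nlinarith [sq_nonneg π]
  have hE2 : |E| ≤ c * π ^ 4 / (2 * T + 1) :=
    le_of_lt (lt_of_lt_of_le hEδ (min_le_right _ _))
  set C : ℝ := |E| / π ^ 4 / (m : ℝ) ^ 2 with hCdef
  have hC0 : 0 ≤ C := by positivity
  set S : Type := {k : ℤ // k ≠ 0 ∧ k ≠ -(2 * (m : ℤ))} with hSdef
  set f : S → ℝ := fun m₁ =>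
    |1 / (lam m - π ^ 2 * ((m : ℝ) + (m₁.1 : ℝ)) ^ 2) -
      1 / (π ^ 2 * (m : ℝ) ^ 2 - π ^ 2 * ((m : ℝ) + (m₁.1 : ℝ)) ^ 2)| with hfdef
  set g1 : S → ℝ := fun a => 1 / (a.1 : ℝ) ^ 2 with hg1def
  set g2 : S → ℝ := fun a => 1 / (2 * (m : ℝ) + (a.1 : ℝ)) ^ 2 with hg2def
  have hg1s : Summable g1 := by
    exact (hTs.subtype _)
  have hg2s : Summable g2 := by
    have hinj : Function.Injective (fun a : S => 2 * (m : ℤ) + a.1) := by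
      intro x y hxy
      simp only [add_right_inj] at hxy
      exact Subtype.ext hxy
    have := hTs.comp_injective hinj
    apply this.congr
    intro a
    simp only [hg2def]
    simp only [Function.comp_apply]
    push_cast
    ring_nf
  have hle : ∀ a : S, f a ≤ C * (g1 a + g2 a) := by
    rintro ⟨a, ha, ha2⟩
    have hEq : lam m - π ^ 2 * (m : ℝ) ^ 2 = E := rfl
    have := term_bound (lam m) m hm1 a ha ha2 (by rw [hEq]; exact hE1)
    simpa [hfdef, hg1def, hg2def, hCdef, hEq, mul_add] using this
  have hhs : Summable fun a : S => C * (g1 a + g2 a) := ((hg1s.add hg2s).mul_left C)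
  have hfs : Summable f :=
    Summable.of_nonneg_of_le (fun a => abs_nonneg _) hle hhs
  have hg1T : ∑' a : S, g1 a ≤ T := by
    apply Summable.tsum_le_tsum_of_inj (fun a : S => a.1) Subtype.val_injective
      (fun k _ => by positivity) (fun a => le_refl _) hg1s hTs
  have hg2T : ∑' a : S, g2 a ≤ T := by
    have hinj : Function.Injective (fun a : S => 2 * (m : ℤ) + a.1) := by
      intro x y hxy
      simp only [add_right_inj] at hxy
      exact Subtype.ext hxy
    apply Summable.tsum_le_tsum_of_inj (fun a : S => 2 * (m : ℤ) + a.1) hinj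
      (fun k _ => by positivity) (fun a => ?_) hg2s hTs
    · simp only [hg2def]
      push_cast
      ring_nf
      exact le_refl _
  have hsum_le : ∑' a : S, f a ≤ C * (2 * T) := by
    calc ∑' a : S, f a ≤ ∑' a : S, C * (g1 a + g2 a) := Summable.tsum_le_tsum hle hfs hhs
      _ = C * ((∑' a : S, g1 a) + ∑' a : S, g2 a) := by
          rw [tsum_mul_left, Summable.tsum_add hg1s hg2s]
      _ ≤ C * (2 * T) := by
          apply mul_le_mul_of_nonneg_left _ hC0
          linarith
  have hfnn : 0 ≤ ∑' a : S, f a := tsum_nonneg fun a => abs_nonneg _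
  rw [Real.norm_eq_abs, Real.norm_eq_abs, abs_of_nonneg hfnn,
    abs_of_nonneg (by positivity : (0:ℝ) ≤ 1 / (m : ℝ) ^ 2)]
  calc ∑' a : S, f a ≤ C * (2 * T) := hsum_le
    _ ≤ c * (1 / (m : ℝ) ^ 2) := by
        rw [hCdef]
        have hm2 : (0 : ℝ) < (m : ℝ) ^ 2 := by positivity
        have hp4 : (0 : ℝ) < π ^ 4 := by positivity
        have h1 : |E| * (2 * T) ≤ c * π ^ 4 := by
          have h2 : |E| * (2 * T) ≤ (c * π ^ 4 / (2 * T + 1)) * (2 * T) :=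
            mul_le_mul_of_nonneg_right hE2 (by linarith)
          have h3 : (c * π ^ 4 / (2 * T + 1)) * (2 * T) ≤ c * π ^ 4 := by
            rw [div_mul_eq_mul_div, div_le_iff₀ (by linarith)]
            nlinarith [mul_pos hc hp4]
          linarith
        have hCe : C * (2 * T) = |E| * (2 * T) / (π ^ 4 * (m : ℝ) ^ 2) := by
          rw [hCdef]; ring
        rw [hCe, div_le_iff₀ (by positivity)]
        calc |E| * (2 * T) ≤ c * π ^ 4 := h1
          _ = c * (1 / (m : ℝ) ^ 2) * (π ^ 4 * (m : ℝ) ^ 2) := by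
              field_simp
end

section
/- Let q be a real-valued absolutely continuous function on [0,1] with q(0)=q(1) and c₀ = ∫₀¹ q(x) dx = 0, and let (λ_m) be a sequence of real numbers with λ_m = (mπ)² + o(1). Define b₁(λ_m) = Σ_{m₁∈ℤ, m₁∉{0,−2m}} c_{m₁} c_{2m+m₁} / (λ_m − π²(m+m₁)²). Then b₁(λ_m) = o(m^{−2}) as m → ∞. -/
open MeasureTheory Set Real Filter Asymptotics Topology

/-- The cosine Fourier coefficients `c_n = ∫₀¹ q(x) cos(nπx) dx`. -/
noncomputable def fourierCos (q : ℝ → ℝ) (n : ℤ) : ℝ :=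
  ∫ x in (0:ℝ)..1, q x * Real.cos ((n : ℝ) * π * x)

lemma cos_int_eval (n : ℤ) (hn : ((n:ℝ) * π) ≠ 0) (t : ℝ) :
    ∫ x in t..1, Real.cos ((n:ℝ) * π * x)
      = -(Real.sin ((n:ℝ) * π * t)) / ((n:ℝ) * π) := by
  rw [intervalIntegral.integral_comp_mul_left Real.cos hn, integral_cos]
  rw [mul_one, Real.sin_int_mul_pi]
  simp only [smul_eq_mul]
  field_simp
  ring

lemma parts_aux (g : ℝ → ℝ) (hgm : StronglyMeasurable g)
    (hg : IntegrableOn g (Icc 0 1)) (n : ℤ) (hn : n ≠ 0) :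
    ∫ x in (0:ℝ)..1, (∫ t in (0:ℝ)..x, g t) * Real.cos ((n:ℝ) * π * x)
      = -(1/((n:ℝ) * π)) * ∫ t in (0:ℝ)..1, g t * Real.sin ((n:ℝ) * π * t) := by
  have hc : ((n:ℝ) * π) ≠ 0 :=
    mul_ne_zero (Int.cast_ne_zero.mpr hn) Real.pi_ne_zero
  set μ := volume.restrict (Ioc (0:ℝ) 1) with hμ
  have hgIoc : Integrable g μ := hg.mono_set Ioc_subset_Icc_self
  set F : ℝ → ℝ → ℝ := fun x t => (Ioc 0 x).indicator g t * Real.cos ((n:ℝ) * π * x) with hF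
  -- integrability of uncurry F
  have hFeq : Function.uncurry F = fun p : ℝ × ℝ =>
      ({q : ℝ × ℝ | q.2 ∈ Ioc 0 q.1}.indicator (fun q => g q.2) p) * Real.cos ((n:ℝ) * π * p.1) := by
    funext p
    rcases p with ⟨x, t⟩
    simp only [Function.uncurry, hF, Set.indicator, mem_setOf_eq]
    by_cases h : t ∈ Ioc 0 x <;> simp [h]
  have hSmeas : MeasurableSet {q : ℝ × ℝ | q.2 ∈ Ioc 0 q.1} := by
    apply MeasurableSet.inter
    · exact measurableSet_lt measurable_const measurable_snd
    · exact measurableSet_le measurable_snd measurable_fst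
  have hFmeas : AEStronglyMeasurable (Function.uncurry F) (μ.prod μ) := by
    rw [hFeq]
    apply AEStronglyMeasurable.mul
    · exact ((hgm.comp_measurable measurable_snd).indicator hSmeas).aestronglyMeasurable
    · exact (Real.continuous_cos.comp (continuous_const.mul continuous_fst)).aestronglyMeasurable
  have hdom : Integrable (fun p : ℝ × ℝ => (1:ℝ) * g p.2) (μ.prod μ) :=
    (integrable_const (1:ℝ)).mul_prod hgIoc
  have hFint : Integrable (Function.uncurry F) (μ.prod μ) := by
    apply hdom.mono hFmeas
    filter_upwards with p
    rw [hFeq]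
    simp only [norm_mul, one_mul, norm_one]
    calc ‖{q : ℝ × ℝ | q.2 ∈ Ioc 0 q.1}.indicator (fun q => g q.2) p‖ * ‖Real.cos ((n:ℝ) * π * p.1)‖
        ≤ ‖g p.2‖ * 1 := by
          apply mul_le_mul _ (Real.abs_cos_le_one _) (abs_nonneg _) (norm_nonneg _)
          rw [Real.norm_eq_abs, Real.norm_eq_abs]
          by_cases hp : 0 < p.2 ∧ p.2 ≤ p.1 <;> simp [Set.indicator, hp, abs_nonneg]
      _ = ‖g p.2‖ := mul_one _
  -- LHS rewrite
  have lhs_eq : ∫ x in (0:ℝ)..1, (∫ t in (0:ℝ)..x, g t) * Real.cos ((n:ℝ) * π * x)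
      = ∫ x, (∫ t, F x t ∂μ) ∂μ := by
    rw [intervalIntegral.integral_of_le zero_le_one]
    apply setIntegral_congr_fun measurableSet_Ioc
    intro x hx
    have h1 : ∫ t in (0:ℝ)..x, g t = ∫ t, (Ioc 0 x).indicator g t ∂μ := by
      rw [intervalIntegral.integral_of_le hx.1.le,
        integral_indicator measurableSet_Ioc, hμ,
        Measure.restrict_restrict measurableSet_Ioc,
        Set.Ioc_inter_Ioc]
      simp [max_self, min_eq_left hx.2]
    dsimp only
    rw [h1, ← integral_mul_const]
  rw [lhs_eq, MeasureTheory.integral_integral_swap hFint]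
  -- compute inner integral in t variable
  have rhs_eq : ∫ t, (∫ x, F x t ∂μ) ∂μ
      = ∫ t, g t * (-(Real.sin ((n:ℝ) * π * t)) / ((n:ℝ) * π)) ∂μ := by
    apply setIntegral_congr_fun measurableSet_Ioc
    intro t ht
    have hFx : ∀ x : ℝ, F x t = (Ici t).indicator (fun x => g t * Real.cos ((n:ℝ) * π * x)) x := by
      intro x
      simp only [hF, Set.indicator, mem_Ioc, mem_Ici]
      by_cases hx : t ≤ x
      · simp [hx, ht.1]
      · simp [hx]
    simp_rw [hFx]
    rw [integral_indicator measurableSet_Ici, hμ,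
      Measure.restrict_restrict measurableSet_Ici]
    have hset : Ici t ∩ Ioc (0:ℝ) 1 = Ioc t 1 ∪ {t} := by
      ext y
      simp only [mem_inter_iff, mem_Ici, mem_Ioc, mem_union, mem_singleton_iff]
      constructor
      · rintro ⟨h1, h2, h3⟩
        rcases eq_or_lt_of_le h1 with h | h
        · right; exact h.symm
        · left; exact ⟨h, h3⟩
      · rintro (⟨h1, h2⟩ | rfl)
        · exact ⟨h1.le, lt_trans ht.1 h1, h2⟩
        · exact ⟨le_refl _, ht.1, ht.2⟩
    rw [hset]
    have : ∫ x in Ioc t 1 ∪ {t}, g t * Real.cos ((n:ℝ) * π * x)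
        = ∫ x in Ioc t 1, g t * Real.cos ((n:ℝ) * π * x) := by
      rw [union_singleton]
      exact setIntegral_congr_set (MeasureTheory.insert_ae_eq_self t (Ioc t 1))
    rw [this, ← intervalIntegral.integral_of_le ht.2, intervalIntegral.integral_const_mul,
      cos_int_eval n hc t]
  rw [rhs_eq]
  rw [← intervalIntegral.integral_of_le zero_le_one, ← intervalIntegral.integral_const_mul]
  apply intervalIntegral.integral_congr
  intro t _
  field_simp

lemma fourierCos_eq (q q' : ℝ → ℝ) (hq' : IntegrableOn q' (Icc 0 1))
    (hqrep : ∀ x ∈ Icc (0:ℝ) 1, q x = q 0 + ∫ t in (0:ℝ)..x, q' t)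
    (hc0 : ∫ x in (0:ℝ)..1, q x = 0) (n : ℤ) :
    fourierCos q n = -(1/((n:ℝ)*π)) * ∫ t in (0:ℝ)..1, q' t * Real.sin ((n:ℝ)*π*t) := by
  rcases eq_or_ne n 0 with rfl | hn
  · simp only [fourierCos, Int.cast_zero, zero_mul]
    simp only [Real.sin_zero, mul_zero, Real.cos_zero, mul_one]
    rw [hc0]
    simp
  have hc : ((n:ℝ) * π) ≠ 0 := mul_ne_zero (Int.cast_ne_zero.mpr hn) Real.pi_ne_zero
  -- measurable representative
  set g : ℝ → ℝ := (hq'.aestronglyMeasurable).mk q' with hg_def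
  have hgm : StronglyMeasurable g := hq'.aestronglyMeasurable.stronglyMeasurable_mk
  have hae : q' =ᵐ[volume.restrict (Icc 0 1)] g := hq'.aestronglyMeasurable.ae_eq_mk
  have hgint : IntegrableOn g (Icc 0 1) := hq'.congr hae
  have hprim : ∀ x ∈ Icc (0:ℝ) 1, (∫ t in (0:ℝ)..x, q' t) = ∫ t in (0:ℝ)..x, g t := by
    intro x hx
    apply intervalIntegral.integral_congr_ae
    have h1 : ∀ᵐ t ∂(volume.restrict (Ioc (0:ℝ) x)), q' t = g t :=
      ae_restrict_of_ae_restrict_of_subset (Ioc_subset_Icc_self.trans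
        (Icc_subset_Icc le_rfl hx.2)) hae
    rw [uIoc_of_le hx.1]
    exact ae_imp_of_ae_restrict h1
  have hsin : (∫ t in (0:ℝ)..1, q' t * Real.sin ((n:ℝ)*π*t))
      = ∫ t in (0:ℝ)..1, g t * Real.sin ((n:ℝ)*π*t) := by
    apply intervalIntegral.integral_congr_ae
    have h1 : ∀ᵐ t ∂(volume.restrict (Ioc (0:ℝ) 1)), q' t = g t :=
      ae_restrict_of_ae_restrict_of_subset Ioc_subset_Icc_self hae
    rw [uIoc_of_le zero_le_one]
    have h2 : ∀ᵐ t ∂(volume.restrict (Ioc (0:ℝ) 1)), q' t * Real.sin ((n:ℝ)*π*t) = g t * Real.sin ((n:ℝ)*π*t) := by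
      filter_upwards [h1] with t ht
      rw [ht]
    exact ae_imp_of_ae_restrict h2
  -- rewrite the integrand
  have step1 : fourierCos q n
      = ∫ x in (0:ℝ)..1, (q 0 * Real.cos ((n:ℝ)*π*x)
          + (∫ t in (0:ℝ)..x, g t) * Real.cos ((n:ℝ)*π*x)) := by
    apply intervalIntegral.integral_congr
    intro x hx
    rw [uIcc_of_le zero_le_one] at hx
    dsimp only
    rw [hqrep x hx, hprim x hx, add_mul]
  rw [step1]
  -- integrability facts
  have hcont : ContinuousOn (fun x => ∫ t in (0:ℝ)..x, g t) (Icc 0 1) := by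
    have := intervalIntegral.continuousOn_primitive (f := g) (a := 0) (b := 1)
      (μ := volume) hgint
    apply this.congr
    intro x hx
    dsimp only
    rw [intervalIntegral.integral_of_le hx.1]
  have hint2 : IntervalIntegrable (fun x => (∫ t in (0:ℝ)..x, g t) * Real.cos ((n:ℝ)*π*x))
      volume 0 1 := by
    apply ContinuousOn.intervalIntegrable
    rw [uIcc_of_le zero_le_one]
    exact hcont.mul ((Real.continuous_cos.comp (continuous_const.mul continuous_id)).continuousOn)
  have hint1 : IntervalIntegrable (fun x => q 0 * Real.cos ((n:ℝ)*π*x)) volume 0 1 :=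
    ((continuous_const.mul (Real.continuous_cos.comp (continuous_const.mul continuous_id))).intervalIntegrable 0 1)
  rw [intervalIntegral.integral_add hint1 hint2]
  have e1 : ∫ x in (0:ℝ)..1, q 0 * Real.cos ((n:ℝ)*π*x) = 0 := by
    rw [intervalIntegral.integral_const_mul, cos_int_eval n hc 0]
    simp
  rw [e1, zero_add, parts_aux g hgm hgint n hn, hsin]

-- Riemann-Lebesgue
lemma riemann_lebesgue (q' : ℝ → ℝ) (hq' : IntegrableOn q' (Icc 0 1)) :
    Tendsto (fun n : ℤ => ∫ t in (0:ℝ)..1, q' t * Real.sin ((n:ℝ)*π*t)) cofinite (𝓝 0) := by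
  set f : ℝ → ℂ := (Icc 0 1).indicator (fun t => (q' t : ℂ)) with hf_def
  have hfint : Integrable f volume := by
    rw [hf_def, integrable_indicator_iff measurableSet_Icc]
    exact hq'.ofReal
  have hRL := Real.tendsto_integral_exp_smul_cocompact f
  have hcast : Tendsto (fun n : ℤ => -(n:ℝ) * (1/2)) cofinite (cocompact ℝ) := by
    apply (Filter.tendsto_cocompact_mul_right₀ (by norm_num : (1/2:ℝ) ≠ 0)).comp
    have : Tendsto (fun n : ℤ => ((-n : ℤ) : ℝ)) cofinite (cocompact ℝ) :=
      Int.tendsto_coe_cofinite.comp (Equiv.neg ℤ).injective.tendsto_cofinite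
    simpa using this
  have hcomp := hRL.comp hcast
  have him : Tendsto (fun n : ℤ =>
      (∫ v : ℝ, Real.fourierChar (-(v * (-(n:ℝ) * (1/2)))) • f v).im) cofinite (𝓝 0) := by
    have h0 : Tendsto Complex.im (𝓝 0) (𝓝 0) := by
      simpa using Complex.continuous_im.tendsto (0:ℂ)
    exact h0.comp hcomp
  have key : ∀ n : ℤ, (∫ v : ℝ, Real.fourierChar (-(v * (-(n:ℝ) * (1/2)))) • f v).im
      = ∫ t in (0:ℝ)..1, q' t * Real.sin ((n:ℝ)*π*t) := by
    intro n
    have hint : Integrable (fun v : ℝ => Real.fourierChar (-(v * (-(n:ℝ) * (1/2)))) • f v) volume := by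
      exact (VectorFourier.fourierIntegral_convergent_iff Real.continuous_fourierChar (L := (ContinuousLinearMap.mul ℝ ℝ).toLinearMap₁₂) (ContinuousLinearMap.mul ℝ ℝ).continuous₂ (-(n:ℝ) * (1/2))).mpr hfint
    rw [show (∫ v : ℝ, Real.fourierChar (-(v * (-(n:ℝ) * (1/2)))) • f v).im
        = ∫ v : ℝ, (Real.fourierChar (-(v * (-(n:ℝ) * (1/2)))) • f v).im from
      (Complex.imCLM.integral_comp_comm hint).symm]
    have : ∀ v : ℝ, (Real.fourierChar (-(v * (-(n:ℝ) * (1/2)))) • f v).im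
        = (Icc (0:ℝ) 1).indicator (fun t => q' t * Real.sin ((n:ℝ)*π*t)) v := by
      intro v
      rw [Circle.smul_def, Real.fourierChar_apply]
      simp only [hf_def, Set.indicator]
      by_cases hv : v ∈ Icc (0:ℝ) 1
      · simp only [hv, if_pos, smul_eq_mul]
        rw [Complex.mul_im]
        have harg : (2 * π * -(v * (-(n:ℝ) * (1/2)))) = (n:ℝ) * π * v := by ring
        rw [harg]
        rw [Complex.exp_ofReal_mul_I_im]
        simp [mul_comm]
      · simp [hv]
    rw [MeasureTheory.integral_congr_ae (Eventually.of_forall this),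
      integral_indicator measurableSet_Icc, intervalIntegral.integral_of_le zero_le_one,
      ← integral_Icc_eq_integral_Ioc]
  simpa only [key] using him

lemma one_le_sq_int_real {j : ℤ} (hj : j ≠ 0) : (1:ℝ) ≤ (j:ℝ)^2 := by
  have h1 : (1:ℤ) ≤ |j| := Int.one_le_abs hj
  have h2 : (1:ℤ) ≤ j^2 := by nlinarith [sq_abs j]
  exact_mod_cast h2

lemma hsummable (m : ℕ) : Summable (fun k : ℤ => 1/((k:ℝ)^2 * (2*(m:ℝ)+(k:ℝ))^2)) := by
  refine Summable.of_nonneg_of_le (fun k => by positivity) (fun k => ?_)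
    (summable_one_div_int_pow.mpr one_lt_two)
  rcases eq_or_ne k 0 with rfl | hk0
  · simp
  rcases eq_or_ne (2*(m:ℤ)+k) 0 with h2 | h2
  · have hz : (2*(m:ℝ)+(k:ℝ)) = 0 := by
      have : ((2*(m:ℤ)+k : ℤ):ℝ) = 0 := by rw [h2]; norm_num
      push_cast at this
      linarith
    rw [hz]
    norm_num
    positivity
  · have h1 : (1:ℝ) ≤ (2*(m:ℝ)+(k:ℝ))^2 := by
      have h3 := one_le_sq_int_real h2
      push_cast at h3
      convert h3 using 2
    have hk2 : (0:ℝ) < (k:ℝ)^2 := by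
      have := one_le_sq_int_real hk0; linarith
    apply one_div_le_one_div_of_le hk2
    exact le_mul_of_one_le_right hk2.le h1

lemma sum_bound (m : ℕ) (hm : 1 ≤ m) :
    ∑' k:ℤ, 1/((k:ℝ)^2 * (2*(m:ℝ)+(k:ℝ))^2)
      ≤ (∑' k:ℤ, 1/(k:ℝ)^2) / (m:ℝ)^2 := by
  have hKsum : Summable (fun k : ℤ => 1/(k:ℝ)^2) := summable_one_div_int_pow.mpr one_lt_two
  have hshift : Summable (fun k : ℤ => 1/((2*(m:ℤ)+k : ℤ):ℝ)^2) := by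
    have := hKsum.comp_injective (add_right_injective (2*(m:ℤ)))
    exact this
  have hshift' : Summable (fun k : ℤ => 1/(2*(m:ℝ)+(k:ℝ))^2) := by
    apply hshift.congr
    intro k; push_cast; ring_nf
  have hH : Summable (fun k : ℤ => (1/(2*(m:ℝ)^2)) * (1/(k:ℝ)^2 + 1/(2*(m:ℝ)+(k:ℝ))^2)) :=
    ((hKsum.add hshift').mul_left _)
  have hmpos : (0:ℝ) < (m:ℝ) := by exact_mod_cast hm
  have hpt : ∀ k : ℤ, 1/((k:ℝ)^2 * (2*(m:ℝ)+(k:ℝ))^2)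
      ≤ (1/(2*(m:ℝ)^2)) * (1/(k:ℝ)^2 + 1/(2*(m:ℝ)+(k:ℝ))^2) := by
    intro k
    rcases eq_or_ne (k:ℝ) 0 with hk0 | hk0
    · rw [hk0]; simp; positivity
    rcases eq_or_ne (2*(m:ℝ)+(k:ℝ)) 0 with hb0 | hb0
    · rw [hb0]; simp; positivity
    set a := (k:ℝ); set b := 2*(m:ℝ)+(k:ℝ)
    set u := 1/a; set v := 1/b
    have hu : a * u = 1 := by simp only [u]; exact mul_one_div_cancel hk0
    have hv : b * v = 1 := by simp only [v]; exact mul_one_div_cancel hb0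
    have hba : b - a = 2*(m:ℝ) := by simp only [a, b]; ring
    have hid : u - v = 2*(m:ℝ)*(u*v) := by
      have h5 : (b-a)*(u*v) = (b*v)*u - (a*u)*v := by ring
      have h6 : u - v = (b-a)*(u*v) := by rw [h5, hu, hv]; ring
      rw [h6, hba]
    have e1 : 1/(a^2*b^2) = u^2*v^2 := by
      simp only [u, v]; field_simp
    have e2 : 1/a^2 = u^2 := by simp only [u]; field_simp
    have e3 : 1/b^2 = v^2 := by simp only [v]; field_simp
    rw [e1, e2, e3]
    have hsq : (u - v)^2 ≤ 2*u^2 + 2*v^2 := by nlinarith [sq_nonneg (u+v)]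
    have hid2 : (u-v)^2 = 4*(m:ℝ)^2*(u*v)^2 := by rw [hid]; ring
    have h4 : 4*(m:ℝ)^2*(u*v)^2 ≤ 2*u^2+2*v^2 := by rw [← hid2]; exact hsq
    rw [one_div]
    have key : 2*(m:ℝ)^2 * (u^2*v^2) ≤ u^2+v^2 := by nlinarith [h4]
    calc u^2*v^2 = (2*(m:ℝ)^2)⁻¹ * (2*(m:ℝ)^2 * (u^2*v^2)) := by
          field_simp
      _ ≤ (2*(m:ℝ)^2)⁻¹ * (u^2+v^2) := mul_le_mul_of_nonneg_left key (by positivity)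
  have step := Summable.tsum_le_tsum hpt (hsummable m) hH
  calc ∑' k:ℤ, 1/((k:ℝ)^2 * (2*(m:ℝ)+(k:ℝ))^2)
      ≤ ∑' k:ℤ, (1/(2*(m:ℝ)^2)) * (1/(k:ℝ)^2 + 1/(2*(m:ℝ)+(k:ℝ))^2) := step
    _ = (1/(2*(m:ℝ)^2)) * ((∑' k:ℤ, 1/(k:ℝ)^2) + ∑' k:ℤ, 1/(2*(m:ℝ)+(k:ℝ))^2) := by
        rw [tsum_mul_left, Summable.tsum_add hKsum hshift']
    _ = (∑' k:ℤ, 1/(k:ℝ)^2) / (m:ℝ)^2 := by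
        have : (∑' k:ℤ, 1/(2*(m:ℝ)+(k:ℝ))^2) = ∑' k:ℤ, 1/(k:ℝ)^2 := by
          rw [← (Equiv.addLeft (2*(m:ℤ))).tsum_eq (fun k : ℤ => 1/(k:ℝ)^2)]
          apply tsum_congr
          intro k
          simp [Equiv.addLeft]
        rw [this]
        field_simp
        ring

lemma unif_small {s : ℤ → ℝ} (h : Tendsto s cofinite (𝓝 (0:ℝ))) {ε : ℝ} (hε : 0 < ε) :
    ∃ N : ℕ, ∀ k : ℤ, (N:ℤ) ≤ |k| → |s k| ≤ ε := by
  have hev : ∀ᶠ k in (cofinite : Filter ℤ), |s k| ≤ ε := by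
    have h2 : ∀ᶠ x in 𝓝 (0:ℝ), |x| ≤ ε := by
      filter_upwards [Metric.closedBall_mem_nhds (0:ℝ) hε] with x hx
      simpa [Real.dist_eq] using hx
    exact h.eventually h2
  rw [eventually_cofinite] at hev
  obtain ⟨N, hN⟩ := (hev.image Int.natAbs).bddAbove
  refine ⟨N+1, fun k hk => ?_⟩
  by_contra hks
  have h1 : k.natAbs ≤ N := hN ⟨k, hks, rfl⟩
  have h2 : ((N:ℤ)+1) ≤ |k| := by push_cast at hk ⊢; linarith
  rw [Int.abs_eq_natAbs] at h2
  omega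

set_option maxHeartbeats 1000000 in
/-- For `q` real-valued absolutely continuous on `[0,1]` with `q(0)=q(1)` and
`∫₀¹ q = 0`, and `λ_m = (mπ)² + o(1)`, the sum
`b₁(λ_m) = Σ_{m₁∉{0,−2m}} c_{m₁} c_{2m+m₁}/(λ_m − π²(m+m₁)²)` is `o(m⁻²)`. -/
theorem b1_littleo
    (q q' : ℝ → ℝ)
    (hq' : IntegrableOn q' (Icc 0 1))
    (hqrep : ∀ x ∈ Icc (0:ℝ) 1, q x = q 0 + ∫ t in (0:ℝ)..x, q' t)
    (hq01 : q 0 = q 1)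
    (hc0 : ∫ x in (0:ℝ)..1, q x = 0)
    (lam : ℕ → ℝ)
    (hlam : Tendsto (fun m : ℕ => lam m - ((m : ℝ) * π) ^ 2) atTop (nhds 0)) :
    (fun m : ℕ =>
        ∑' m₁ : {k : ℤ // k ≠ 0 ∧ k ≠ -(2 * (m : ℤ))},
          fourierCos q m₁.1 * fourierCos q (2 * (m : ℤ) + m₁.1) /
            (lam m - π ^ 2 * ((m : ℝ) + (m₁.1 : ℝ)) ^ 2))
      =o[atTop] fun m : ℕ => 1 / (m : ℝ) ^ 2 := by
  have hπ : (0:ℝ) < π := Real.pi_pos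
  set s : ℤ → ℝ := fun n => ∫ t in (0:ℝ)..1, q' t * Real.sin ((n:ℝ)*π*t) with hs_def
  have hcos : ∀ n : ℤ, fourierCos q n = -(1/((n:ℝ)*π)) * s n := fun n =>
    fourierCos_eq q q' hq' hqrep hc0 n
  have hRL : Tendsto s cofinite (𝓝 0) := riemann_lebesgue q' hq'
  set S : ℝ := ∫ t in (0:ℝ)..1, |q' t| with hS_def
  have hq'I : IntervalIntegrable q' volume 0 1 := by
    rw [intervalIntegrable_iff_integrableOn_Ioc_of_le zero_le_one]
    exact hq'.mono_set Ioc_subset_Icc_self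
  have hS0 : 0 ≤ S := intervalIntegral.integral_nonneg zero_le_one (fun t _ => abs_nonneg _)
  have hsb : ∀ n : ℤ, |s n| ≤ S := by
    intro n
    have h1 : |s n| ≤ ∫ t in (0:ℝ)..1, |q' t * Real.sin ((n:ℝ)*π*t)| := by
      have h0 := intervalIntegral.norm_integral_le_integral_norm
          (f := fun t => q' t * Real.sin ((n:ℝ)*π*t)) (μ := volume) zero_le_one
      simp only [Real.norm_eq_abs] at h0
      exact h0
    refine h1.trans (intervalIntegral.integral_mono_on zero_le_one ?_ hq'I.abs ?_)
    · exact (hq'I.mul_continuousOn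
        ((Real.continuous_sin.comp (continuous_const.mul continuous_id)).continuousOn)).abs
    · intro t _
      rw [abs_mul]
      exact mul_le_of_le_one_right (abs_nonneg _) (Real.abs_sin_le_one _)
  set K : ℝ := ∑' k:ℤ, 1/(k:ℝ)^2 with hK_def
  have hK0 : 0 ≤ K := tsum_nonneg (fun k => by positivity)
  rw [isLittleO_iff]
  intro c hc
  have hden : (0:ℝ) < 2*S*K + 2 := by nlinarith
  set ε : ℝ := c * π^4 / (2*S*K + 2) with hε_def
  have hεpos : 0 < ε := div_pos (by positivity) hden
  obtain ⟨N, hN⟩ := unif_small hRL hεpos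
  clear_value s S K ε
  have hev1 : ∀ᶠ (m:ℕ) in atTop, |lam m - ((m:ℝ)*π)^2| ≤ π^2/2 := by
    have h2 : ∀ᶠ x in 𝓝 (0:ℝ), |x| ≤ π^2/2 := by
      filter_upwards [Metric.closedBall_mem_nhds (0:ℝ)
        (show (0:ℝ) < π^2/2 by positivity)] with x hx
      simpa [Real.dist_eq] using hx
    exact hlam.eventually h2
  filter_upwards [hev1, eventually_ge_atTop 1, eventually_ge_atTop N] with m hεm hm1 hmN
  have hmR : (1:ℝ) ≤ (m:ℝ) := by exact_mod_cast hm1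
  -- term bound
  have hterm : ∀ k : {k : ℤ // k ≠ 0 ∧ k ≠ -(2 * (m : ℤ))},
      ‖fourierCos q k.1 * fourierCos q (2*(m:ℤ)+k.1) /
          (lam m - π^2*((m:ℝ)+(k.1:ℝ))^2)‖
        ≤ (2*S*ε/π^4) * (1/((k.1:ℝ)^2 * (2*(m:ℝ)+(k.1:ℝ))^2)) := by
    rintro ⟨k, hk0, hk2⟩
    dsimp only
    set a : ℝ := (k:ℝ) with ha_def
    set b : ℝ := 2*(m:ℝ)+(k:ℝ) with hb_def
    set j : ℤ := 2*(m:ℤ)+k with hj_def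
    have hj0 : j ≠ 0 := by
      intro h; apply hk2; rw [hj_def] at h; omega
    have hjb : (j:ℝ) = b := by push_cast [hj_def, hb_def]; ring
    have ha1 : (1:ℝ) ≤ |a| := by
      have := Int.one_le_abs hk0
      calc (1:ℝ) = ((1:ℤ):ℝ) := by norm_num
        _ ≤ ((|k|:ℤ):ℝ) := by exact_mod_cast this
        _ = |a| := by rw [ha_def, Int.cast_abs]
    have hb1 : (1:ℝ) ≤ |b| := by
      have := Int.one_le_abs hj0
      calc (1:ℝ) = ((1:ℤ):ℝ) := by norm_num
        _ ≤ ((|j|:ℤ):ℝ) := by exact_mod_cast this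
        _ = |b| := by rw [← hjb, Int.cast_abs]
    have hP1 : (1:ℝ) ≤ |a| * |b| := by nlinarith [ha1, hb1]
    -- denominator bound
    have hD : π^2*(|a| * |b|)/2 ≤ |lam m - π^2*((m:ℝ)+a)^2| := by
      have hD1 : lam m - π^2*((m:ℝ)+a)^2 = -((π^2*(a*b)) - (lam m - ((m:ℝ)*π)^2)) := by
        rw [hb_def]; ring
      rw [hD1, abs_neg]
      have h2 := abs_sub_abs_le_abs_sub (π^2*(a*b)) (lam m - ((m:ℝ)*π)^2)
      have h3 : |π^2*(a*b)| = π^2*(|a| * |b|) := by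
        rw [abs_mul, abs_mul, abs_of_pos (by positivity : (0:ℝ) < π^2)]
      nlinarith [hεm, h2, h3]
    -- coefficient bounds
    have hc1 : |fourierCos q k| = |s k| / (|a| * π) := by
      rw [hcos k, abs_mul, abs_neg, abs_div, abs_one, abs_mul, abs_of_pos hπ]
      ring
    have hc2 : |fourierCos q j| = |s j| / (|b| * π) := by
      rw [hcos j, abs_mul, abs_neg, abs_div, abs_one, abs_mul, abs_of_pos hπ, hjb]
      ring
    -- numerator bound
    have hnum : |s k| * |s j| ≤ S * ε := by
      rcases le_or_gt (N:ℤ) |k| with hNk | hNk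
      · have e1 := hN k hNk
        have e2 := hsb j
        rw [mul_comm S ε] at *
        exact mul_le_mul e1 e2 (abs_nonneg _) hεpos.le
      · have hjN : (N:ℤ) ≤ |j| := by
          have h5 : |(2*(m:ℤ))| ≤ |j| + |k| := by
            calc |(2*(m:ℤ))| = |j + (-k)| := by rw [hj_def]; ring_nf
              _ ≤ |j| + |(-k)| := abs_add_le _ _
              _ = |j| + |k| := by rw [abs_neg]
          have h6 : |(2*(m:ℤ))| = 2*(m:ℤ) := abs_of_nonneg (by positivity)
          have h7 : (N:ℤ) ≤ (m:ℤ) := by exact_mod_cast hmN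
          omega
        have e1 := hN j hjN
        have e2 := hsb k
        exact mul_le_mul e2 e1 (abs_nonneg _) hS0
    -- assemble
    have hane : |a| ≠ 0 := ne_of_gt (by linarith : (0:ℝ) < |a|)
    have hbne : |b| ≠ 0 := ne_of_gt (by linarith : (0:ℝ) < |b|)
    clear_value a b j
    have hb0 : (0:ℝ) < |a| * π := by
      have : (0:ℝ) < |a| := by linarith
      positivity
    have hb0' : (0:ℝ) < |b| * π := by
      have : (0:ℝ) < |b| := by linarith
      positivity
    have hD0 : (0:ℝ) < π^2*(|a| * |b|)/2 := by positivity
    have hterm_eq : ‖fourierCos q k * fourierCos q j /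
        (lam m - π^2*((m:ℝ)+a)^2)‖
        = (|s k| * |s j|) / ((π^2*(|a| * |b|)) * |lam m - π^2*((m:ℝ)+a)^2|) := by
      rw [Real.norm_eq_abs, abs_div, abs_mul, hc1, hc2]
      rw [div_mul_div_comm, div_div]
      congr 1
      ring
    rw [hterm_eq]
    have hDD : (π^2*(|a| * |b|)) * (π^2*(|a| * |b|)/2)
        ≤ (π^2*(|a| * |b|)) * |lam m - π^2*((m:ℝ)+a)^2| := by
      apply mul_le_mul_of_nonneg_left hD (by positivity)
    calc (|s k| * |s j|) / ((π^2*(|a| * |b|)) * |lam m - π^2*((m:ℝ)+a)^2|)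
        ≤ (S * ε) / ((π^2*(|a| * |b|)) * (π^2*(|a| * |b|)/2)) := by
          apply div_le_div₀ (by positivity) hnum (by positivity) hDD
      _ = (2*S*ε/π^4) * (1/(a^2 * b^2)) := by
          have h1 : |a|^2 = a^2 := sq_abs a
          have h2 : |b|^2 = b^2 := sq_abs b
          have hde : (π^2*(|a| * |b|)) * (π^2*(|a| * |b|)/2) = π^4*(a^2*b^2)/2 := by
            linear_combination (π^4*|b|^2/2)*h1 + (π^4*a^2/2)*h2
          rw [hde]
          have hxa : a ≠ 0 := abs_ne_zero.mp hane
          have hxb : b ≠ 0 := abs_ne_zero.mp hbne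
          field_simp
  -- sum it up
  have hg : Summable (fun k : ℤ => 1/((k:ℝ)^2 * (2*(m:ℝ)+(k:ℝ))^2)) := hsummable m
  have hgsub : Summable (fun k : {k : ℤ // k ≠ 0 ∧ k ≠ -(2 * (m:ℤ))} =>
      (2*S*ε/π^4) * (1/((k.1:ℝ)^2 * (2*(m:ℝ)+(k.1:ℝ))^2))) :=
    ((hg.subtype _).mul_left _)
  have hbnd := tsum_of_norm_bounded hgsub.hasSum hterm
  have hsub_le : (∑' k : {k : ℤ // k ≠ 0 ∧ k ≠ -(2 * (m:ℤ))},
      1/((k.1:ℝ)^2 * (2*(m:ℝ)+(k.1:ℝ))^2)) ≤ K / (m:ℝ)^2 := by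
    have h1 := Summable.tsum_subtype_le (fun k : ℤ => 1/((k:ℝ)^2 * (2*(m:ℝ)+(k:ℝ))^2))
      {k : ℤ | k ≠ 0 ∧ k ≠ -(2 * (m:ℤ))} (fun k => by positivity) hg
    have h2 := sum_bound m hm1
    rw [← hK_def] at h2
    exact le_trans h1 h2
  have hm2 : (0:ℝ) < (m:ℝ)^2 := by positivity
  calc ‖∑' k : {k : ℤ // k ≠ 0 ∧ k ≠ -(2 * (m:ℤ))},
        fourierCos q k.1 * fourierCos q (2*(m:ℤ)+k.1) /
          (lam m - π^2*((m:ℝ)+(k.1:ℝ))^2)‖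
      ≤ ∑' k : {k : ℤ // k ≠ 0 ∧ k ≠ -(2 * (m:ℤ))},
          (2*S*ε/π^4) * (1/((k.1:ℝ)^2 * (2*(m:ℝ)+(k.1:ℝ))^2)) := hbnd
    _ = (2*S*ε/π^4) * ∑' k : {k : ℤ // k ≠ 0 ∧ k ≠ -(2 * (m:ℤ))},
          1/((k.1:ℝ)^2 * (2*(m:ℝ)+(k.1:ℝ))^2) := tsum_mul_left
    _ ≤ (2*S*ε/π^4) * (K / (m:ℝ)^2) :=
        mul_le_mul_of_nonneg_left hsub_le (by positivity)
    _ ≤ c * ‖1 / (m:ℝ)^2‖ := by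
        rw [Real.norm_eq_abs, abs_of_pos (by positivity : (0:ℝ) < 1/(m:ℝ)^2)]
        have e : 2*S*ε/π^4 * (K/(m:ℝ)^2) = (2*S*K/(2*S*K+2)) * c * (1/(m:ℝ)^2) := by
          rw [hε_def]
          field_simp
        rw [e]
        have hfrac : 2*S*K/(2*S*K+2) ≤ 1 := by
          rw [div_le_one hden]; linarith
        calc (2*S*K/(2*S*K+2)) * c * (1/(m:ℝ)^2)
            ≤ 1 * c * (1/(m:ℝ)^2) := by
              apply mul_le_mul_of_nonneg_right _ (by positivity)
              exact mul_le_mul_of_nonneg_right hfrac hc.le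
          _ = c * (1/(m:ℝ)^2) := by ring
end

section
/- Let f ∈ L¹[0,1] be complex-valued and for each integer m define G(x,m) = ∫₀ˣ f(t) e^{i2mπt} dt − x ∫₀¹ f(t) e^{i2mπt} dt. Then sup_{x∈[0,1]} | G(x,m) − ∫₀¹ G(y,m) dy | → 0 as |m| → ∞; that is, G(·,m) minus its mean value tends to zero uniformly on [0,1]. -/
set_option maxHeartbeats 1000000


open MeasureTheory Set Real Filter

/-- `G(x,m) = ∫₀ˣ f(t) e^{i2mπt} dt − x ∫₀¹ f(t) e^{i2mπt} dt`. -/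
noncomputable def Gfun (f : ℝ → ℂ) (m : ℤ) (x : ℝ) : ℂ :=
  (∫ t in (0:ℝ)..x, f t * Complex.exp (Complex.I * 2 * (m : ℂ) * (π : ℂ) * (t : ℂ))) -
    (x : ℂ) * ∫ t in (0:ℝ)..1, f t * Complex.exp (Complex.I * 2 * (m : ℂ) * (π : ℂ) * (t : ℂ))

lemma RL_aux (g : ℝ → ℂ) :
    Tendsto (fun m : ℤ => ∫ t : ℝ, g t * Complex.exp (Complex.I * 2 * (m : ℂ) * (π : ℂ) * (t : ℂ)))
      cofinite (nhds 0) := by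
  have h2 : Tendsto (fun m : ℤ => (-(m : ℝ))) cofinite (cocompact ℝ) := by
    have : Tendsto (fun m : ℤ => ((-m : ℤ) : ℝ)) cofinite (cocompact ℝ) :=
      Int.tendsto_coe_cofinite.comp (Function.Injective.tendsto_cofinite neg_injective)
    simpa using this
  have h := (Real.tendsto_integral_exp_smul_cocompact g).comp h2
  simp only [Function.comp_def] at h
  refine h.congr (fun m => ?_)
  apply integral_congr_ae
  filter_upwards with v
  rw [Circle.smul_def, Real.fourierChar_apply, smul_eq_mul, mul_comm]
  congr 1
  push_cast
  ring

lemma cofinite_to_M {P : ℤ → Prop} (h : ∀ᶠ m in cofinite, P m) :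
    ∃ M : ℕ, ∀ m : ℤ, (M : ℤ) ≤ |m| → P m := by
  rw [Filter.eventually_cofinite] at h
  refine ⟨h.toFinset.sup (fun m => m.natAbs) + 1, fun m hm => ?_⟩
  by_contra hP
  have hmem : m ∈ h.toFinset := h.mem_toFinset.2 hP
  have hle : m.natAbs ≤ h.toFinset.sup (fun m => m.natAbs) :=
    Finset.le_sup (f := fun m => m.natAbs) hmem
  rw [Int.abs_eq_natAbs] at hm
  omega

lemma RL_pt (f : ℝ → ℂ) (hf : IntegrableOn f (Icc 0 1)) (x : ℝ) (hx : x ∈ Icc (0:ℝ) 1) :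
    Tendsto (fun m : ℤ =>
        ∫ t in (0:ℝ)..x, f t * Complex.exp (Complex.I * 2 * (m : ℂ) * (π : ℂ) * (t : ℂ)))
      cofinite (nhds 0) := by
  have hsub : Ioc (0:ℝ) x ⊆ Icc 0 1 := fun t ht => ⟨ht.1.le, ht.2.trans hx.2⟩
  have h := RL_aux ((Ioc (0:ℝ) x).indicator f)
  refine h.congr (fun m => ?_)
  rw [intervalIntegral.integral_of_le hx.1, ← integral_indicator measurableSet_Ioc]
  congr 1
  ext t
  by_cases ht : t ∈ Ioc (0:ℝ) x <;> simp [indicator_of_mem, indicator_of_notMem, ht]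

lemma norm_kernel (m : ℤ) (t : ℝ) :
    ‖Complex.exp (Complex.I * 2 * (m : ℂ) * (π : ℂ) * (t : ℂ))‖ = 1 := by
  rw [Complex.norm_exp]
  have : (Complex.I * 2 * (m : ℂ) * (π : ℂ) * (t : ℂ)).re = 0 := by
    simp [Complex.mul_re, Complex.mul_im]
  rw [this, Real.exp_zero]

lemma unif_small_s10 (f : ℝ → ℂ) (hf : IntegrableOn f (Icc 0 1)) :
    ∀ ε > (0:ℝ), ∃ M : ℕ, ∀ m : ℤ, (M : ℤ) ≤ |m| → ∀ x ∈ Icc (0:ℝ) 1,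
      ‖∫ t in (0:ℝ)..x, f t * Complex.exp (Complex.I * 2 * (m : ℂ) * (π : ℂ) * (t : ℂ))‖ < ε := by
  intro ε hε
  -- interval integrability of f and ‖f‖ on subintervals of [0,1]
  have hii : ∀ a ∈ Icc (0:ℝ) 1, ∀ b ∈ Icc (0:ℝ) 1,
      IntervalIntegrable f volume a b := by
    intro a ha b hb
    exact (hf.mono_set (uIcc_subset_Icc ha hb)).intervalIntegrable
  have hiin : ∀ a ∈ Icc (0:ℝ) 1, ∀ b ∈ Icc (0:ℝ) 1,
      IntervalIntegrable (fun t => ‖f t‖) volume a b := by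
    intro a ha b hb
    have h1 : IntegrableOn (fun t => ‖f t‖) (uIcc a b) volume :=
      (hf.mono_set (uIcc_subset_Icc ha hb)).norm
    exact h1.intervalIntegrable
  have hiie : ∀ (m : ℤ), ∀ a ∈ Icc (0:ℝ) 1, ∀ b ∈ Icc (0:ℝ) 1,
      IntervalIntegrable (fun t => f t * Complex.exp (Complex.I * 2 * (m : ℂ) * (π : ℂ) * (t : ℂ)))
        volume a b := by
    intro m a ha b hb
    have : IntegrableOn (fun t => f t * Complex.exp (Complex.I * 2 * (m : ℂ) * (π : ℂ) * (t : ℂ)))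
        (Icc (0:ℝ) 1) := by
      refine hf.mul_continuousOn ?_ isCompact_Icc
      exact (Continuous.continuousOn (by continuity))
    exact (this.mono_set (uIcc_subset_Icc ha hb)).intervalIntegrable
  -- the primitive of ‖f‖ and its uniform continuity
  set H : ℝ → ℝ := fun x => ∫ t in (0:ℝ)..x, ‖f t‖ with hH
  have hHc : ContinuousOn H (Icc (0:ℝ) 1) := by
    have : IntegrableOn (fun t => ‖f t‖) (uIcc (0:ℝ) 1) := by
      rw [uIcc_of_le (by norm_num)]; exact hf.norm
    simpa [uIcc_of_le (zero_le_one (α := ℝ))] using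
      intervalIntegral.continuousOn_primitive_interval (a := (0:ℝ)) (b := 1) this
  have hUC := isCompact_Icc.uniformContinuousOn_of_continuous hHc
  rw [Metric.uniformContinuousOn_iff] at hUC
  obtain ⟨δ, hδ, hδ'⟩ := hUC (ε/2) (by linarith)
  obtain ⟨n, hn⟩ := exists_nat_one_div_lt (K := ℝ) hδ
  set N : ℕ := n + 1 with hNdef
  have hN : (0:ℝ) < N := by positivity
  have hgrid : ∀ j : ℕ, j ≤ N → ((j : ℝ) / N) ∈ Icc (0:ℝ) 1 := by
    intro j hj
    constructor
    · positivity
    · rw [div_le_one hN]; exact_mod_cast hj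
  -- eventual smallness at all grid points
  have hev : ∀ᶠ m : ℤ in cofinite, ∀ j ∈ Finset.range (N+1),
      ‖∫ t in (0:ℝ)..((j:ℝ)/N),
        f t * Complex.exp (Complex.I * 2 * (m : ℂ) * (π : ℂ) * (t : ℂ))‖ < ε/2 := by
    rw [Filter.eventually_all_finset]
    intro j hj
    have hj' : j ≤ N := by simpa using Nat.lt_succ_iff.mp (Finset.mem_range.mp hj)
    have := RL_pt f hf _ (hgrid j hj')
    have := this.norm
    simp only [norm_zero] at this
    exact this.eventually_lt_const (by linarith)
  obtain ⟨M, hM⟩ := cofinite_to_M hev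
  refine ⟨M, fun m hm x hx => ?_⟩
  -- choose grid point
  set j : ℕ := ⌊x * N⌋.toNat with hj
  have hx0 : (0:ℝ) ≤ x * N := mul_nonneg hx.1 hN.le
  have hfl : (0:ℤ) ≤ ⌊x * N⌋ := Int.le_floor.2 (by exact_mod_cast hx0)
  have hjN : j ≤ N := by
    have : (⌊x * N⌋ : ℝ) ≤ x * N := Int.floor_le _
    have h1 : x * N ≤ N := by nlinarith [hx.2]
    have : (⌊x * N⌋ : ℝ) ≤ (N : ℝ) := this.trans h1
    have : ⌊x * N⌋ ≤ (N : ℤ) := by exact_mod_cast this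
    omega
  have hjr : ((j:ℝ)) ≤ x * N := by
    have h := Int.floor_le (x * N)
    have h2 : ((⌊x * (N:ℝ)⌋.toNat : ℤ) : ℝ) ≤ x * N := by
      rw [Int.toNat_of_nonneg hfl]; exact h
    exact_mod_cast h2
  have hjr2 : x * N < (j:ℝ) + 1 := by
    have h := Int.lt_floor_add_one (x * N)
    have h2 : x * N < ((⌊x * (N:ℝ)⌋.toNat : ℤ) : ℝ) + 1 := by
      rw [Int.toNat_of_nonneg hfl]; exact h
    exact_mod_cast h2
  set y : ℝ := (j:ℝ)/N with hy
  have hymem : y ∈ Icc (0:ℝ) 1 := hgrid j hjN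
  have hyx : y ≤ x := by rw [hy, div_le_iff₀ hN]; linarith
  have hxy : x - y < 1/N := by
    rw [hy, sub_lt_iff_lt_add', ← add_div, lt_div_iff₀ hN]
    linarith
  have hdist : dist x y < δ := by
    rw [Real.dist_eq, abs_of_nonneg (by linarith)]
    have hNe : (1:ℝ)/N = 1/(n+1:ℝ) := by rw [hNdef]; push_cast; ring
    calc x - y < 1/N := hxy
      _ = 1/(n+1:ℝ) := hNe
      _ < δ := hn
  -- the two bounds
  have hgridsmall : ‖∫ t in (0:ℝ)..y,
      f t * Complex.exp (Complex.I * 2 * (m : ℂ) * (π : ℂ) * (t : ℂ))‖ < ε/2 := by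
    have := hM m hm j (Finset.mem_range.mpr (Nat.lt_succ_of_le hjN))
    simpa [hy] using this
  have hdiff : ‖(∫ t in (0:ℝ)..x,
        f t * Complex.exp (Complex.I * 2 * (m : ℂ) * (π : ℂ) * (t : ℂ))) -
      ∫ t in (0:ℝ)..y,
        f t * Complex.exp (Complex.I * 2 * (m : ℂ) * (π : ℂ) * (t : ℂ))‖ ≤ |H x - H y| := by
    rw [intervalIntegral.integral_interval_sub_left (hiie m 0 (by norm_num) x hx)
      (hiie m 0 (by norm_num) y hymem)]
    have h1 : ‖∫ t in y..x, f t * Complex.exp (Complex.I * 2 * (m : ℂ) * (π : ℂ) * (t : ℂ))‖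
        ≤ |∫ t in y..x, ‖f t * Complex.exp (Complex.I * 2 * (m : ℂ) * (π : ℂ) * (t : ℂ))‖| :=
      intervalIntegral.norm_integral_le_abs_integral_norm
    have h2 : (∫ t in y..x, ‖f t * Complex.exp (Complex.I * 2 * (m : ℂ) * (π : ℂ) * (t : ℂ))‖)
        = ∫ t in y..x, ‖f t‖ := by
      congr 1
      ext t
      rw [norm_mul, norm_kernel, mul_one]
    have h3 : (∫ t in y..x, ‖f t‖) = H x - H y := by
      rw [hH]
      rw [intervalIntegral.integral_interval_sub_left (hiin 0 (by norm_num) x hx)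
        (hiin 0 (by norm_num) y hymem)]
    rw [h2, h3] at h1
    exact h1
  have hHsmall : |H x - H y| < ε/2 := by
    have := hδ' x hx y hymem hdist
    rwa [Real.dist_eq] at this
  have hfinal := norm_add_le
    ((∫ t in (0:ℝ)..x, f t * Complex.exp (Complex.I * 2 * (m : ℂ) * (π : ℂ) * (t : ℂ))) -
      ∫ t in (0:ℝ)..y, f t * Complex.exp (Complex.I * 2 * (m : ℂ) * (π : ℂ) * (t : ℂ)))
    (∫ t in (0:ℝ)..y, f t * Complex.exp (Complex.I * 2 * (m : ℂ) * (π : ℂ) * (t : ℂ)))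
  rw [sub_add_cancel] at hfinal
  calc ‖∫ t in (0:ℝ)..x, f t * Complex.exp (Complex.I * 2 * (m : ℂ) * (π : ℂ) * (t : ℂ))‖
      ≤ _ := hfinal
    _ < ε/2 + ε/2 := add_lt_add_of_le_of_lt (hdiff.trans hHsmall.le) hgridsmall
    _ = ε := by ring

/-- For integrable `f : [0,1] → ℂ`, the function `G(·,m)` minus its mean value
tends to `0` uniformly on `[0,1]` as `|m| → ∞`. -/
theorem G_minus_mean_uniformly_small
    (f : ℝ → ℂ) (hf : IntegrableOn f (Icc 0 1)) :
    ∀ ε > (0:ℝ), ∃ M : ℕ, ∀ m : ℤ, (M : ℤ) ≤ |m| → ∀ x ∈ Icc (0:ℝ) 1,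
      ‖Gfun f m x - ∫ y in (0:ℝ)..1, Gfun f m y‖ < ε := by
  intro ε hε
  obtain ⟨M, hM⟩ := unif_small_s10 f hf (ε/5) (by linarith)
  refine ⟨M, fun m hm x hx => ?_⟩
  have hG : ∀ y ∈ Icc (0:ℝ) 1, ‖Gfun f m y‖ ≤ 2*ε/5 := by
    intro y hy
    have h1 := (hM m hm y hy).le
    have h2 := (hM m hm 1 (by norm_num)).le
    calc ‖Gfun f m y‖ ≤ ‖∫ t in (0:ℝ)..y,
          f t * Complex.exp (Complex.I * 2 * (m : ℂ) * (π : ℂ) * (t : ℂ))‖ +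
        ‖(y:ℂ) * ∫ t in (0:ℝ)..1,
          f t * Complex.exp (Complex.I * 2 * (m : ℂ) * (π : ℂ) * (t : ℂ))‖ := norm_sub_le _ _
      _ ≤ ε/5 + 1 * (ε/5) := by
          refine add_le_add h1 ?_
          rw [norm_mul]
          refine mul_le_mul ?_ h2 (norm_nonneg _) zero_le_one
          rw [Complex.norm_real, Real.norm_eq_abs, abs_of_nonneg hy.1]
          exact hy.2
      _ = 2*ε/5 := by ring
  have hmean : ‖∫ y in (0:ℝ)..1, Gfun f m y‖ ≤ 2*ε/5 := by
    have := intervalIntegral.norm_integral_le_of_norm_le_const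
      (a := (0:ℝ)) (b := 1) (C := 2*ε/5) (f := fun y => Gfun f m y) ?_
    · simpa using this
    · intro y hy
      refine hG y ?_
      rw [uIoc_of_le (zero_le_one (α := ℝ))] at hy
      exact ⟨hy.1.le, hy.2⟩
  calc ‖Gfun f m x - ∫ y in (0:ℝ)..1, Gfun f m y‖
      ≤ ‖Gfun f m x‖ + ‖∫ y in (0:ℝ)..1, Gfun f m y‖ := norm_sub_le _ _
    _ ≤ 2*ε/5 + 2*ε/5 := add_le_add (hG x hx) hmean
    _ < ε := by linarith
end
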